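/- arXiv:2110.12036 — 2 statements merged into one kernel-verified Lean document; each statement's English description precedes it below -/
import Mathlib

section
/- Let M be a MAG over vertices V, and let X ∈ V be such that whenever Y ∈ Pa(X) and Z ∈ Ch(X), also Y ∈ Pa(Z). Let H be the induced subgraph of M over V\{X}. Then for every Y ∈ V\{X}, the descendants of Y in M, excluding X, coincide exactly with the descendants of Y in H. -/
/-- A mixed graph with directed (`dir x y` : x → y), bidirected and undirected edges. -/
structure MixedGraph (V : Type*) where
  dir : V → V → Prop
  bi : V → V → Prop
  und : V → V → Prop
  bi_symm : ∀ x y, bi x y → bi y x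
  und_symm : ∀ x y, und x y → und y x

namespace MixedGraph

variable {V : Type*}

def adj (G : MixedGraph V) (x y : V) : Prop :=
  G.dir x y ∨ G.dir y x ∨ G.bi x y ∨ G.und x y

/-- There is an arrowhead at `y` on the edge between `x` and `y`. -/
def head (G : MixedGraph V) (x y : V) : Prop := G.dir x y ∨ G.bi x y

def pa (G : MixedGraph V) (x : V) : Set V := {y | G.dir y x}
def child (G : MixedGraph V) (x : V) : Set V := {y | G.dir x y}
def nbr (G : MixedGraph V) (x : V) : Set V := {y | G.und x y}
def spouse (G : MixedGraph V) (x : V) : Set V := {y | G.bi x y}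

/-- `x` is an ancestor of `y` (every vertex is an ancestor of itself). -/
def anc (G : MixedGraph V) (x y : V) : Prop := Relation.ReflTransGen G.dir x y

def ancSet (G : MixedGraph V) (S : Set V) : Set V := {x | ∃ y ∈ S, G.anc x y}

/-- The set of descendants of `x` (including `x` itself). -/
def desc (G : MixedGraph V) (x : V) : Set V := {y | G.anc x y}

/-- A path, encoded as a duplicate-free list of at least two vertices with
consecutive vertices adjacent. -/
def IsPath (G : MixedGraph V) (p : List V) : Prop :=
  p.Chain' G.adj ∧ p.Nodup ∧ 2 ≤ p.length

def IsPathBetween (G : MixedGraph V) (p : List V) (x y : V) : Prop :=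
  G.IsPath p ∧ p.head? = some x ∧ p.getLast? = some y

/-- The vertex at (internal) position `i` of `p` is a collider: both incident
path edges have an arrowhead at it. -/
def ColliderAt (G : MixedGraph V) (p : List V) (i : ℕ) : Prop :=
  ∃ a v c, p[i-1]? = some a ∧ p[i]? = some v ∧ p[i+1]? = some c ∧
    G.head a v ∧ G.head c v

/-- A collider path: every non-endpoint vertex is a collider. -/
def IsColliderPath (G : MixedGraph V) (p : List V) : Prop :=
  G.IsPath p ∧ ∀ i, 1 ≤ i → i + 1 < p.length → G.ColliderAt p i

/-- `p` is an m-connecting path between `x` and `y` relative to `Z`. -/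
def MConn (G : MixedGraph V) (p : List V) (x y : V) (Z : Set V) : Prop :=
  G.IsPathBetween p x y ∧
  ∀ i v, 1 ≤ i → i + 1 < p.length → p[i]? = some v →
    (G.ColliderAt p i → v ∈ G.ancSet ({x, y} ∪ Z)) ∧
    (¬ G.ColliderAt p i → v ∉ Z)

/-- `Z` m-separates `x` and `y` in `G`. -/
def MSep (G : MixedGraph V) (x y : V) (Z : Set V) : Prop :=
  ∀ p, ¬ G.MConn p x y Z

/-- Induced subgraph over a set `S` of vertices. -/
def induce (G : MixedGraph V) (S : Set V) : MixedGraph V where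
  dir x y := G.dir x y ∧ x ∈ S ∧ y ∈ S
  bi x y := G.bi x y ∧ x ∈ S ∧ y ∈ S
  und x y := G.und x y ∧ x ∈ S ∧ y ∈ S
  bi_symm := fun x y h => ⟨G.bi_symm x y h.1, h.2.2, h.2.1⟩
  und_symm := fun x y h => ⟨G.und_symm x y h.1, h.2.2, h.2.1⟩

/-- `X` is removable in `G`: the induced subgraph on the remaining vertices
imposes exactly the same m-separation relations over them as `G`. -/
def Removable (G : MixedGraph V) (X : V) : Prop :=
  ∀ Y W : V, Y ≠ X → W ≠ X → Y ≠ W →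
    ∀ Z : Set V, Z ⊆ {v | v ≠ X ∧ v ≠ Y ∧ v ≠ W} →
      (G.MSep Y W Z ↔ (G.induce {v | v ≠ X}).MSep Y W Z)

/-- Ancestral: no directed cycles, no almost directed cycles, and endpoints of
undirected edges have no parents or spouses. -/
def Ancestral (G : MixedGraph V) : Prop :=
  (∀ x y, G.dir x y → ¬ G.anc y x) ∧
  (∀ x y, G.bi x y → ¬ G.anc y x) ∧
  (∀ x y, G.und x y → ∀ z, ¬ G.dir z x ∧ ¬ G.bi z x)

/-- A maximal ancestral graph: ancestral, and any two non-adjacent vertices are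
m-separated by some set. -/
def IsMAG (G : MixedGraph V) : Prop :=
  G.Ancestral ∧
  ∀ x y, x ≠ y → ¬ G.adj x y →
    ∃ Z : Set V, Z ⊆ {v | v ≠ x ∧ v ≠ y} ∧ G.MSep x y Z

/-- Markov boundary of `x`: the vertices with a collider path to `x`. -/
def Mb (G : MixedGraph V) (x : V) : Set V :=
  {y | ∃ p, G.IsColliderPath p ∧ p.head? = some y ∧ p.getLast? = some x}

/-- District of `x`: vertices joined to `x` by a path of bidirected edges. -/
def district (G : MixedGraph V) (x : V) : Set V :=
  {y | Relation.ReflTransGen G.bi x y}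

/-- `Pa⁺(x) = Pa(x) ∪ Dis(x) ∪ Pa(Dis(x)) ∪ N(x)`. -/
def paPlus (G : MixedGraph V) (x : V) : Set V :=
  G.pa x ∪ G.district x ∪ (⋃ y ∈ G.district x, G.pa y) ∪ G.nbr x

noncomputable def deltaPlus [Fintype V] (G : MixedGraph V) : ℕ :=
  Finset.univ.sup fun z : V => (G.paPlus z).ncard

/-- Condition 1 of the graphical characterization of removability. -/
def RemCond1 (G : MixedGraph V) (X : V) : Prop :=
  ∀ Y Z : V, G.adj X Y → Z ∈ G.child X ∪ G.nbr X → Z ≠ Y → G.adj Y Z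

/-- Condition 2 of the graphical characterization of removability. -/
def RemCond2 (G : MixedGraph V) (X : V) : Prop :=
  ∀ (p : List V) (Y Z : V), G.IsColliderPath p → p.head? = some X →
    p.getLast? = some Y → Z ∉ p → (∀ v ∈ p.dropLast, G.dir v Z) → G.adj Y Z

end MixedGraph

/-!
A directed path in `M` from `Y ≠ X` can only pass through `X` as `W → X → c`, and then
`W → c` is an edge of `M` avoiding `X`, since `W ∈ Pa(X)` and `c ∈ Ch(X)`. Conversely, a
directed path in the induced subgraph is one in `M` that never enters `X`.
-/

namespace MixedGraph

variable {V : Type*} {G : MixedGraph V}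

theorem anc.of_induce {S : Set V} {x y : V} (h : (G.induce S).anc x y) : G.anc x y :=
  Relation.ReflTransGen.mono (fun _ _ hxy => hxy.1) _ _ h

theorem anc.mem_of_induce {S : Set V} {x y : V} (h : (G.induce S).anc x y) (hx : x ∈ S) :
    y ∈ S := by
  induction h with
  | refl => exact hx
  | tail _ hbc _ => exact hbc.2.2

theorem anc_induce_ne_or_of_anc {X Y b : V}
    (hpar : ∀ Y Z : V, Y ∈ G.pa X → Z ∈ G.child X → Y ∈ G.pa Z)
    (hY : Y ≠ X) (h : G.anc Y b) :
    (b ≠ X ∧ (G.induce {v | v ≠ X}).anc Y b) ∨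
      (b = X ∧ ∃ W ∈ G.pa X, W ≠ X ∧ (G.induce {v | v ≠ X}).anc Y W) := by
  induction h with
  | refl => exact .inl ⟨hY, .refl⟩
  | @tail b c _ hbc ih =>
    by_cases hc : c = X
    · refine .inr ⟨hc, ?_⟩
      rcases ih with ⟨hb, hYb⟩ | ⟨rfl, hW⟩
      · exact ⟨b, hc ▸ hbc, hb, hYb⟩
      · exact hW
    · refine .inl ⟨hc, ?_⟩
      rcases ih with ⟨hb, hYb⟩ | ⟨rfl, W, hWX, hW, hYW⟩
      · exact hYb.tail ⟨hbc, hb, hc⟩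
      · exact hYW.tail ⟨hpar W c hWX hbc, hW, hc⟩

end MixedGraph

open MixedGraph in
theorem stmt3_general {V : Type*} (M : MixedGraph V) (X : V)
    (hpar : ∀ Y Z : V, Y ∈ M.pa X → Z ∈ M.child X → Y ∈ M.pa Z) :
    ∀ Y : V, Y ≠ X →
      M.desc Y \ {X} = (M.induce {v | v ≠ X}).desc Y := by
  intro Y hY
  ext Z
  constructor
  · rintro ⟨hYZ, hZ⟩
    rcases anc_induce_ne_or_of_anc hpar hY hYZ with ⟨_, h⟩ | ⟨hZX, _⟩
    · exact h
    · exact absurd hZX hZ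
  · intro h
    exact ⟨h.of_induce, h.mem_of_induce hY⟩

open MixedGraph in
/-- in a MAG `M`, if every parent of `X` is a parent of every
child of `X`, then descendants in the induced subgraph on `V \ {X}` are
exactly the descendants in `M` other than `X`. -/
theorem stmt3 {V : Type*} (M : MixedGraph V) (hM : M.IsMAG) (X : V)
    (hpar : ∀ Y Z : V, Y ∈ M.pa X → Z ∈ M.child X → Y ∈ M.pa Z) :
    ∀ Y : V, Y ≠ X →
      M.desc Y \ {X} = (M.induce {v | v ≠ X}).desc Y :=
  stmt3_general M X hpar
end

section
/- If X is a removable vertex in a MAG H over vertices V, then the size of the Markov boundary of X with respect to V is at most δ⁺(H) = max over vertices Z of |Pa⁺(Z)|, where Pa⁺(Z) = Pa(Z) ∪ Dis(Z) ∪ Pa(Dis(Z)) ∪ N(Z). -/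
/-!
Pick `Z ∈ Mb(X) ∪ {X}` with no proper descendant in that set; we show `Mb(X) ⊆ Pa⁺(Z)`.
A collider path from `W` to `Z` none of whose vertices other than `Z` descends from `Z` ends in
a bidirected chain `W *→ u ↔ ⋯ ↔ Z` or a single edge, so `W ∈ Pa⁺(Z)`. For `W ∈ Mb(X)` glue
its collider path to `X` with the reversed collider path from `Z` to `X` (if they meet, the path
of `W` already enters `Dis(Z)`). If `X` is a collider on the glued path, it is a collider path as
above. Otherwise it m-connects `W` and `Z` given all vertices except `X`, `W` and the
descendants of `Z`; by removability some path `q` avoiding `X` does too. On `q` a maximal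
descendant of `Z` would be a non-collider with a parent, hence with a child on `q`, which is
absurd; so `q` is again a collider path of the first kind.
-/

theorem List.exists_eq_cons_append_singleton {α : Type*} {p : List α} {a b : α}
    (hlen : 2 ≤ p.length) (ha : p.head? = some a) (hb : p.getLast? = some b) :
    ∃ l, p = a :: (l ++ [b]) := by
  obtain _ | ⟨c, _ | ⟨d, t⟩⟩ := p
  · simp at ha
  · simp at hlen
  obtain rfl : c = a := by simpa using ha
  refine ⟨(d :: t).dropLast, ?_⟩
  rw [List.dropLast_append_getLast? b (by rwa [List.getLast?_cons_cons] at hb)]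

namespace MixedGraph

variable {V : Type*} {G : MixedGraph V} {a b u v w x z : V} {l p s t : List V} {S T : Set V}

lemma anc_antisymm (hA : G.Ancestral) (h₁ : G.anc x v) (h₂ : G.anc v x) : x = v := by
  rcases Relation.ReflTransGen.cases_head h₁ with h | ⟨c, hc, hcv⟩
  · exact h
  · exact absurd (hcv.trans h₂) (hA.1 _ _ hc)

lemma bi_of_head_of_head (hA : G.Ancestral) (h₁ : G.head x v) (h₂ : G.head v x) : G.bi x v := by
  rcases h₁ with h₁ | h₁
  · rcases h₂ with h₂ | h₂
    · exact absurd (.single h₂) (hA.1 _ _ h₁)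
    · exact absurd (.single h₁) (hA.2.1 _ _ h₂)
  · exact h₁

lemma dir_of_adj_of_not_head (hA : G.Ancestral) (hadj : G.adj x v) (hv : ¬ G.head v x)
    (hpa : G.dir z x) : G.dir x v := by
  rcases hadj with h | h | h | h
  · exact h
  · exact absurd (Or.inl h) hv
  · exact absurd (Or.inr (G.bi_symm _ _ h)) hv
  · exact absurd hpa (hA.2.2 x v h z).1

lemma adj_symm (h : G.adj x v) : G.adj v x := by
  rcases h with h | h | h | h
  · exact Or.inr (Or.inl h)
  · exact Or.inl h
  · exact Or.inr (Or.inr (Or.inl (G.bi_symm _ _ h)))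
  · exact Or.inr (Or.inr (Or.inr (G.und_symm _ _ h)))

lemma mem_district_of_bi (h : G.bi x v) : v ∈ G.district x := .single h

lemma district_symm (h : v ∈ G.district x) : x ∈ G.district v := by
  induction h with
  | refl => exact .refl
  | tail _ hbi ih => exact .head (G.bi_symm _ _ hbi) ih

lemma district_trans (h₁ : v ∈ G.district x) (h₂ : z ∈ G.district v) : z ∈ G.district x :=
  h₁.trans h₂

lemma mem_district_of_isChain_bi (h : l.IsChain G.bi) (hu : u ∈ l) (hv : v ∈ l) :
    v ∈ G.district u := by
  have key := List.IsChain.induction (· ∈ G.district (l.head (List.ne_nil_of_mem hu))) l h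
    (fun _ _ hxy hx => hx.tail hxy) (fun _ => .refl)
  exact district_trans (district_symm (key u hu)) (key v hv)

lemma district_subset_paPlus : G.district z ⊆ G.paPlus z :=
  fun _ h => Or.inl (Or.inl (Or.inr h))

lemma mem_paPlus_of_head (hu : u ∈ G.district z) (h : G.head w u) : w ∈ G.paPlus z := by
  rcases h with h | h
  · exact Or.inl (Or.inr (Set.mem_biUnion hu h))
  · exact district_subset_paPlus (district_trans hu (district_symm (mem_district_of_bi h)))

lemma mem_paPlus_of_adj (h : G.adj w z) (hzw : ¬ G.dir z w) : w ∈ G.paPlus z := by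
  rcases h with h | h | h | h
  · exact Or.inl (Or.inl (Or.inl h))
  · exact absurd h hzw
  · exact district_subset_paPlus (mem_district_of_bi (G.bi_symm _ _ h))
  · exact Or.inr (G.und_symm _ _ h)

lemma exists_anc_maximal (hA : G.Ancestral) {M : Set V} (hfin : M.Finite) (hne : M.Nonempty) :
    ∃ z ∈ M, ∀ y ∈ M, G.anc z y → y = z := by
  obtain ⟨z, hzM, hmax⟩ := hfin.exists_maximalFor (fun v => G.ancSet {v}) M hne
  refine ⟨z, hzM, fun y hy hzy => anc_antisymm hA ?_ hzy⟩
  have hsub : G.ancSet {z} ⊆ G.ancSet {y} := fun c ⟨_, hc, hcz⟩ =>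
    ⟨y, rfl, (Set.mem_singleton_iff.mp hc ▸ hcz).trans hzy⟩
  obtain ⟨_, hy', hyz⟩ := hmax hy hsub ⟨y, rfl, .refl⟩
  exact Set.mem_singleton_iff.mp hy' ▸ hyz

lemma IsPath.adj_getElem (h : G.IsPath p) {i : ℕ} (hi : i + 1 < p.length) :
    G.adj p[i] p[i + 1] :=
  List.isChain_iff_getElem.mp h.1 i hi

lemma IsPathBetween.getElem?_zero (hp : G.IsPathBetween p a b) : p[0]? = some a := by
  rw [← List.head?_eq_getElem?]
  exact hp.2.1

lemma IsPathBetween.getElem?_last (hp : G.IsPathBetween p a b) : p[p.length - 1]? = some b := by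
  rw [← List.getLast?_eq_getElem?]
  exact hp.2.2

lemma IsPathBetween.internal_of_ne (hp : G.IsPathBetween p a b) {j : ℕ} (hj : j < p.length)
    (ha : p[j] ≠ a) (hb : p[j] ≠ b) : 1 ≤ j ∧ j + 1 < p.length := by
  refine ⟨Nat.one_le_iff_ne_zero.mpr ?_, ?_⟩
  · rintro rfl
    exact ha (Option.some.inj ((List.getElem?_eq_getElem hj).symm.trans hp.getElem?_zero))
  · by_contra hj'
    obtain rfl : j = p.length - 1 := by omega
    exact hb (Option.some.inj ((List.getElem?_eq_getElem hj).symm.trans hp.getElem?_last))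

lemma IsPathBetween.getElem_ne (hp : G.IsPathBetween p a b) {i : ℕ} (h₁ : 1 ≤ i)
    (h₂ : i + 1 < p.length) : p[i] ≠ a ∧ p[i] ≠ b := by
  have inj := fun {j} (hj : p[i]? = p[j]?) => (List.getElem?_inj (by omega) hp.1.2.1).mp hj
  constructor <;> intro h
  · have := inj ((List.getElem?_eq_getElem _).trans (h ▸ hp.getElem?_zero.symm))
    omega
  · have := inj ((List.getElem?_eq_getElem _).trans (h ▸ hp.getElem?_last.symm))
    omega

lemma colliderAt_iff {i : ℕ} (h₁ : 1 ≤ i) (h₂ : i + 1 < p.length) :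
    G.ColliderAt p i ↔ G.head p[i - 1] p[i] ∧ G.head p[i + 1] p[i] := by
  simp [ColliderAt, List.getElem?_eq_getElem (show i - 1 < p.length by omega),
    List.getElem?_eq_getElem (show i < p.length by omega), List.getElem?_eq_getElem h₂]

lemma IsColliderPath.isChain_bi (hp : G.IsColliderPath (a :: (l ++ [b]))) (hA : G.Ancestral) :
    l.IsChain G.bi := by
  refine List.isChain_iff_getElem.mpr fun i hi => bi_of_head_of_head hA ?_ ?_
  · have := ((colliderAt_iff (by omega) (by simp; omega)).mp
      (hp.2 (i + 2) (by omega) (by simp; omega))).1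
    simpa [List.getElem_append_left (show i < l.length by omega),
      List.getElem_append_left hi] using this
  · have := ((colliderAt_iff (by omega) (by simp; omega)).mp
      (hp.2 (i + 1) (by omega) (by simp; omega))).2
    simpa [List.getElem_append_left (show i < l.length by omega),
      List.getElem_append_left hi] using this

lemma IsColliderPath.head_getElem_zero (hp : G.IsColliderPath (a :: (l ++ [b])))
    (h : 0 < l.length) : G.head a l[0] := by
  have := ((colliderAt_iff le_rfl (by simp; omega)).mp (hp.2 1 le_rfl (by simp; omega))).1
  simpa [List.getElem_append_left h] using this

lemma IsColliderPath.head_getElem_last (hp : G.IsColliderPath (a :: (l ++ [b])))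
    (h : 0 < l.length) : G.head b l[l.length - 1] := by
  have := ((colliderAt_iff (by omega) (by simp)).mp (hp.2 l.length (by omega) (by simp))).2
  simpa [List.getElem_cons, h.ne', List.getElem_append_left (show l.length - 1 < l.length by omega)]
    using this

lemma IsColliderPath.mem_district_of_not_anc (hp : G.IsColliderPath (a :: (l ++ [b])))
    (hA : G.Ancestral) (hl : ∀ v ∈ l, ¬ G.anc b v) (hv : v ∈ l) : v ∈ G.district b := by
  have h0 : 0 < l.length := List.length_pos_of_mem hv
  have hlast : l[l.length - 1] ∈ G.district b := by
    rcases hp.head_getElem_last h0 with h | h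
    · exact absurd (.single h) (hl _ (List.getElem_mem _))
    · exact mem_district_of_bi h
  exact district_trans hlast (mem_district_of_isChain_bi (hp.isChain_bi hA) (List.getElem_mem _) hv)

lemma IsColliderPath.mem_paPlus_of_mem_district (hp : G.IsColliderPath (a :: (l ++ [b])))
    (hA : G.Ancestral) (hv : v ∈ l) (hvz : v ∈ G.district z) : a ∈ G.paPlus z := by
  have h0 : 0 < l.length := List.length_pos_of_mem hv
  exact mem_paPlus_of_head
    (district_trans hvz (mem_district_of_isChain_bi (hp.isChain_bi hA) hv (List.getElem_mem h0)))
    (hp.head_getElem_zero h0)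

lemma mem_paPlus_of_isColliderPath (hA : G.Ancestral) (hp : G.IsColliderPath p)
    (ha : p.head? = some a) (hb : p.getLast? = some b) (hdesc : ∀ v ∈ p, v ≠ b → ¬ G.anc b v) :
    a ∈ G.paPlus b := by
  obtain ⟨l, rfl⟩ := List.exists_eq_cons_append_singleton hp.1.2.2 ha hb
  have hbl : b ∉ l := fun h =>
    List.disjoint_of_nodup_append (List.nodup_cons.mp hp.1.2.1).2 h (List.mem_singleton_self b)
  by_cases hl : l = []
  · subst hl
    have hab : a ≠ b := by simpa using hp.1.2.1
    exact mem_paPlus_of_adj (by simpa using hp.1.adj_getElem (i := 0) (by simp))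
      fun h => hdesc a (by simp) hab (.single h)
  · obtain ⟨v, hv⟩ := List.exists_mem_of_ne_nil l hl
    refine hp.mem_paPlus_of_mem_district hA hv (hp.mem_district_of_not_anc hA (fun u hu => ?_) hv)
    exact hdesc u (by simp [hu]) fun h => hbl (h ▸ hu)

lemma IsColliderPath.tail (h : G.IsColliderPath (a :: p)) (hp : 2 ≤ p.length) :
    G.IsColliderPath p := by
  obtain ⟨⟨hch, hnd, -⟩, hcol⟩ := h
  refine ⟨⟨hch.tail, hnd.of_cons, hp⟩, fun i h₁ h₂ => ?_⟩
  obtain ⟨c, v, d, hc, hv, hd, hcv, hdv⟩ := hcol (i + 1) (by omega) (by simp; omega)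
  refine ⟨c, v, d, ?_, by simpa using hv, by simpa using hd, hcv, hdv⟩
  rwa [show i + 1 - 1 = i - 1 + 1 by omega, List.getElem?_cons_succ] at hc

lemma IsColliderPath.mem_Mb_union (h : G.IsColliderPath p) (hb : p.getLast? = some b)
    (hv : v ∈ p) : v ∈ G.Mb b ∪ {b} := by
  induction p with
  | nil => simp at hv
  | cons c t ih =>
    rcases List.mem_cons.mp hv with rfl | hvt
    · exact Or.inl ⟨_, h, rfl, hb⟩
    obtain _ | ⟨d, _ | ⟨e, t⟩⟩ := t
    · simp at hvt
    · obtain rfl : b = d := by simpa using hb.symm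
      exact Or.inr (by simpa using hvt)
    · exact ih (h.tail (by simp)) (by simpa [List.getLast?_cons_cons] using hb) hvt

lemma exists_isColliderPath_of_mem_Mb (h : w ∈ G.Mb x) :
    ∃ l, G.IsColliderPath (w :: (l ++ [x])) := by
  obtain ⟨p, hp, hw, hx⟩ := h
  obtain ⟨l, rfl⟩ := List.exists_eq_cons_append_singleton hp.1.2.2 hw hx
  exact ⟨l, hp⟩

lemma IsColliderPath.reverse (h : G.IsColliderPath p) : G.IsColliderPath p.reverse := by
  obtain ⟨⟨hch, hnd, hlen⟩, hcol⟩ := h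
  refine ⟨⟨List.isChain_reverse.mpr (hch.imp fun _ _ => adj_symm), List.nodup_reverse.mpr hnd,
    by simpa using hlen⟩, fun i h₁ h₂ => ?_⟩
  simp only [List.length_reverse] at h₂
  have := (colliderAt_iff (p := p) (i := p.length - 1 - i) (by omega) (by omega)).mp
    (hcol _ (by omega) (by omega))
  rw [colliderAt_iff h₁ (by simpa using h₂)]
  simp only [List.getElem_reverse, show p.length - 1 - (i - 1) = p.length - 1 - i + 1 by omega,
    show p.length - 1 - (i + 1) = p.length - 1 - i - 1 by omega]
  exact this.symm

lemma colliderAt_append_left {m : List V} {i : ℕ} (hi : i + 1 < l.length)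
    (h : G.ColliderAt l i) : G.ColliderAt (l ++ m) i := by
  obtain ⟨c, v, d, hc, hv, hd, hcv, hdv⟩ := h
  exact ⟨c, v, d, by rwa [List.getElem?_append_left (by omega)],
    by rwa [List.getElem?_append_left (by omega)], by rwa [List.getElem?_append_left hi], hcv, hdv⟩

lemma colliderAt_append_right {m : List V} {j : ℕ} (hj : 1 ≤ j) (h : G.ColliderAt m j) :
    G.ColliderAt (l ++ m) (l.length + j) := by
  obtain ⟨c, v, d, hc, hv, hd, hcv, hdv⟩ := h
  refine ⟨c, v, d, ?_, ?_, ?_, hcv, hdv⟩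
  · rwa [show l.length + j - 1 = l.length + (j - 1) by omega, List.getElem?_append_right (by omega),
      Nat.add_sub_cancel_left]
  · rwa [List.getElem?_append_right (by omega), Nat.add_sub_cancel_left]
  · rwa [Nat.add_assoc, List.getElem?_append_right (by omega), Nat.add_sub_cancel_left]

lemma IsPath.append_cons (hs : G.IsPath (s ++ [x])) (ht : G.IsPath (x :: t))
    (hnd : (s ++ x :: t).Nodup) : G.IsPath (s ++ x :: t) := by
  refine ⟨?_, hnd, by have := hs.2.2; simp at this ⊢; omega⟩
  rw [List.append_cons]
  exact hs.1.append_overlap ht.1 (List.cons_ne_nil x [])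

lemma colliderAt_append_cons (hs : G.IsColliderPath (s ++ [x])) (ht : G.IsColliderPath (x :: t))
    {i : ℕ} (h₁ : 1 ≤ i) (h₂ : i + 1 < (s ++ x :: t).length) (hi : i ≠ s.length) :
    G.ColliderAt (s ++ x :: t) i := by
  simp only [List.length_append, List.length_cons] at h₂
  rcases Nat.lt_or_gt_of_ne hi with hi | hi
  · rw [List.append_cons]
    exact colliderAt_append_left (by simp; omega) (hs.2 i h₁ (by simp; omega))
  · obtain ⟨j, rfl⟩ : ∃ j, i = s.length + j := ⟨i - s.length, by omega⟩
    exact colliderAt_append_right (by omega) (ht.2 j (by omega) (by simp; omega))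

lemma IsColliderPath.append_cons (hs : G.IsColliderPath (s ++ [x]))
    (ht : G.IsColliderPath (x :: t)) (hnd : (s ++ x :: t).Nodup)
    (hx : G.ColliderAt (s ++ x :: t) s.length) : G.IsColliderPath (s ++ x :: t) :=
  ⟨IsPath.append_cons hs.1 ht.1 hnd, fun i h₁ h₂ =>
    if hi : i = s.length then hi ▸ hx else colliderAt_append_cons hs ht h₁ h₂ hi⟩

lemma mConn_append_cons (hs : G.IsColliderPath (s ++ [x])) (ht : G.IsColliderPath (x :: t))
    (hnd : (s ++ x :: t).Nodup) (ha : s.head? = some a) (hb : t.getLast? = some b)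
    (hx : ¬ G.ColliderAt (s ++ x :: t) s.length) (hxS : x ∉ S)
    (hS : ∀ v ∈ s ++ t, v ∈ ({a, b} : Set V) ∪ S) : G.MConn (s ++ x :: t) a b S := by
  refine ⟨⟨IsPath.append_cons hs.1 ht.1 hnd, by simp [List.head?_append, ha],
    by simp [List.getLast?_append, List.getLast?_cons, hb]⟩, fun i v h₁ h₂ hv => ?_⟩
  by_cases hi : i = s.length
  · subst hi
    obtain rfl : x = v := by simpa using hv
    exact ⟨fun hc => absurd hc hx, fun _ => hxS⟩
  refine ⟨fun _ => ⟨v, hS v ?_, .refl⟩, fun hn => absurd (colliderAt_append_cons hs ht h₁ h₂ hi) hn⟩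
  have hvx : v ≠ x := by
    rintro rfl
    have hx' : (s ++ v :: t)[s.length]? = some v := by simp
    exact hi ((List.getElem?_inj (by omega) hnd).mp (hv.trans hx'.symm))
  have := List.mem_of_getElem? hv
  simp only [List.mem_append, List.mem_cons] at this ⊢
  tauto

lemma mem_of_induce_adj (h : (G.induce T).adj u v) : u ∈ T ∧ v ∈ T := by
  rcases h with h | h | h | h
  · exact h.2
  · exact h.2.symm
  · exact h.2
  · exact h.2

lemma adj_of_induce_adj (h : (G.induce T).adj u v) : G.adj u v := by
  rcases h with h | h | h | h
  exacts [Or.inl h.1, Or.inr (Or.inl h.1), Or.inr (Or.inr (Or.inl h.1)),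
    Or.inr (Or.inr (Or.inr h.1))]

lemma IsPath.mem_of_induce (h : (G.induce T).IsPath p) (hv : v ∈ p) : v ∈ T := by
  have hlen : 2 ≤ p.length := h.2.2
  obtain ⟨i, hi, rfl⟩ := List.mem_iff_getElem.mp hv
  by_cases hi' : i + 1 < p.length
  · exact (mem_of_induce_adj (h.adj_getElem hi')).1
  · convert (mem_of_induce_adj (h.adj_getElem (i := i - 1) (by omega))).2 using 2
    omega

lemma colliderAt_induce_iff (hT : ∀ v ∈ p, v ∈ T) {i : ℕ} :
    (G.induce T).ColliderAt p i ↔ G.ColliderAt p i := by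
  have head_iff : ∀ {c v}, c ∈ p → v ∈ p → ((G.induce T).head c v ↔ G.head c v) := by
    intro c v hc hv
    simp only [head, induce, hT c hc, hT v hv, and_self, and_true]
  refine exists_congr fun c => exists_congr fun v => exists_congr fun d => ?_
  refine and_congr_right fun hc => and_congr_right fun hv => and_congr_right fun hd => ?_
  have hv' := List.mem_of_getElem? hv
  exact and_congr (head_iff (List.mem_of_getElem? hc) hv') (head_iff (List.mem_of_getElem? hd) hv')

lemma MConn.of_induce (h : (G.induce T).MConn p a b S) : G.MConn p a b S := by
  obtain ⟨⟨⟨hch, hnd, hlen⟩, ha, hb⟩, hint⟩ := h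
  have hT : ∀ v ∈ p, v ∈ T := fun v hv => IsPath.mem_of_induce ⟨hch, hnd, hlen⟩ hv
  refine ⟨⟨⟨hch.imp fun _ _ => adj_of_induce_adj, hnd, hlen⟩, ha, hb⟩, fun i v h₁ h₂ hv => ?_⟩
  rw [← colliderAt_induce_iff hT]
  refine ⟨fun hc => ?_, (hint i v h₁ h₂ hv).2⟩
  obtain ⟨y, hy, hvy⟩ := (hint i v h₁ h₂ hv).1 hc
  exact ⟨y, hy, Relation.ReflTransGen.mono (fun _ _ h => h.1) _ _ hvy⟩

-- A maximal inner descendant of `z` on `p` cannot be a collider (it would be an ancestor of `w`,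
-- `z` or `S`) and has a parent, so a path edge points out of it, to a larger inner descendant.
lemma MConn.not_anc (hA : G.Ancestral) (hq : G.MConn p w z S) (hzw : ¬ G.anc z w)
    (hS : ∀ s ∈ S, ¬ G.anc z s) : ∀ v ∈ p, v ≠ w → v ≠ z → ¬ G.anc z v := by
  obtain ⟨hp, hint⟩ := hq
  have not_collider : ∀ i (h₁ : 1 ≤ i) (h₂ : i + 1 < p.length), G.anc z p[i] →
      ¬ G.ColliderAt p i := by
    intro i h₁ h₂ hzv hcol
    obtain ⟨y, hy, hvy⟩ := (hint i p[i] h₁ h₂ (List.getElem?_eq_getElem _)).1 hcol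
    rcases hy with (rfl | rfl) | hy
    · exact hzw (hzv.trans hvy)
    · exact (hp.getElem_ne h₁ h₂).2 (anc_antisymm hA hvy hzv)
    · exact hS y hy (hzv.trans hvy)
  by_contra! hex
  obtain ⟨v, ⟨hvp, hvw, hvz, hzv⟩, hmax⟩ := exists_anc_maximal hA
    (M := {v | v ∈ p ∧ v ≠ w ∧ v ≠ z ∧ G.anc z v}) (p.finite_toSet.subset fun _ h => h.1) hex
  obtain ⟨i, hi, rfl⟩ := List.mem_iff_getElem.mp hvp
  obtain ⟨h₁, h₂⟩ := hp.internal_of_ne hi hvw hvz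
  obtain ⟨c, -, hcv⟩ := (Relation.ReflTransGen.cases_tail hzv).resolve_left hvz
  have no_child : ∀ j (hj : j < p.length), G.adj p[i] p[j] → ¬ G.head p[j] p[i] → False := by
    intro j hj hadj hnh
    have hdir := dir_of_adj_of_not_head hA hadj hnh hcv
    have hzu : G.anc z p[j] := hzv.tail hdir
    have hji : p[j] = p[i] := hmax _ ⟨List.getElem_mem _, fun h => hzw (h ▸ hzu),
      fun h => hA.1 _ _ hdir (h ▸ hzv), hzu⟩ (.single hdir)
    exact hA.1 _ _ (hji ▸ hdir) .refl
  rcases not_and_or.mp ((colliderAt_iff h₁ h₂).not.mp (not_collider i h₁ h₂ hzv)) with h | h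
  · refine no_child (i - 1) (by omega) (adj_symm ?_) h
    convert hp.1.adj_getElem (i := i - 1) (by omega) using 2
    omega
  · exact no_child (i + 1) h₂ (hp.1.adj_getElem h₂) h

lemma mem_paPlus_of_mConn (hA : G.Ancestral) (hq : G.MConn p w z S) (hzw : ¬ G.anc z w)
    (hS : ∀ s ∈ S, ¬ G.anc z s) (hdesc : ∀ v ∈ p, v ≠ w → v ∉ S → G.anc z v) :
    w ∈ G.paPlus z := by
  have hnd := hq.not_anc hA hzw hS
  obtain ⟨hp, hint⟩ := hq
  have hcol : G.IsColliderPath p := ⟨hp.1, fun i h₁ h₂ => by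
    by_contra hn
    obtain ⟨hw, hz⟩ := hp.getElem_ne h₁ h₂
    exact hnd _ (List.getElem_mem _) hw hz
      (hdesc _ (List.getElem_mem _) hw ((hint i p[i] h₁ h₂ (List.getElem?_eq_getElem _)).2 hn))⟩
  refine mem_paPlus_of_isColliderPath hA hcol hp.2.1 hp.2.2 fun v hv hvz => ?_
  by_cases hvw : v = w
  · exact hvw ▸ hzw
  · exact hnd v hv hvw hvz

lemma mem_paPlus_of_removable (hA : G.Ancestral) (hrem : G.Removable x) (hwx : w ≠ x)
    (hzx : z ≠ x) (hzw : ¬ G.anc z w) (hp : G.MConn p w z {v | v ≠ x ∧ v ≠ w ∧ ¬ G.anc z v}) :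
    w ∈ G.paPlus z := by
  have hwz : w ≠ z := fun h => hzw (h ▸ .refl)
  have hsep : ¬ (G.induce {v | v ≠ x}).MSep w z {v | v ≠ x ∧ v ≠ w ∧ ¬ G.anc z v} := fun h =>
    (hrem w z hwx hzx hwz _ fun v hv => ⟨hv.1, hv.2.1, fun h => hv.2.2 (h ▸ .refl)⟩).mpr h p hp
  obtain ⟨q, hq⟩ := not_forall_not.mp hsep
  refine mem_paPlus_of_mConn hA hq.of_induce hzw (fun s hs => hs.2.2) fun v hv hvw hvS => ?_
  by_contra h
  exact hvS ⟨IsPath.mem_of_induce hq.1.1 hv, hvw, h⟩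

lemma mem_paPlus_of_append_cons (hA : G.Ancestral) (hrem : G.Removable x)
    (hs : G.IsColliderPath (s ++ [x])) (ht : G.IsColliderPath (x :: t)) (hnd : (s ++ x :: t).Nodup)
    (hw : s.head? = some w) (hz : t.getLast? = some z)
    (hdesc : ∀ v ∈ s ++ x :: t, v ≠ z → ¬ G.anc z v) : w ∈ G.paPlus z := by
  have hws : w ∈ s := List.mem_of_mem_head? hw
  have hzt : z ∈ t := List.mem_of_mem_getLast? hz
  have hx : x ∉ s ++ t := (List.nodup_cons.mp (List.nodup_middle.mp hnd)).1
  have hwz : w ≠ z := fun h =>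
    List.disjoint_of_nodup_append hnd hws (h ▸ List.mem_cons_of_mem x hzt)
  have hzw : ¬ G.anc z w := hdesc w (List.mem_append_left _ hws) hwz
  by_cases hcol : G.ColliderAt (s ++ x :: t) s.length
  · exact mem_paPlus_of_isColliderPath hA (IsColliderPath.append_cons hs ht hnd hcol)
      (by simp [List.head?_append, hw]) (by simp [List.getLast?_append, List.getLast?_cons, hz])
      hdesc
  refine mem_paPlus_of_removable hA hrem (fun h => hx (h ▸ List.mem_append_left _ hws))
    (fun h => hx (h ▸ List.mem_append_right _ hzt)) hzw
    (mConn_append_cons hs ht hnd hw hz hcol (fun h => h.1 rfl) fun v hv => ?_)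
  by_cases hvw : v = w
  · exact Or.inl (Or.inl hvw)
  by_cases hvz : v = z
  · exact Or.inl (Or.inr hvz)
  refine Or.inr ⟨fun h => hx (h ▸ hv), hvw, hdesc v ?_ hvz⟩
  simp only [List.mem_append, List.mem_cons] at hv ⊢
  tauto

theorem Mb_subset_paPlus (hA : G.Ancestral) (hrem : G.Removable x) (hz : z ∈ G.Mb x ∪ {x})
    (hmax : ∀ y ∈ G.Mb x ∪ {x}, G.anc z y → y = z) : G.Mb x ⊆ G.paPlus z := by
  have hndesc : ∀ y ∈ G.Mb x ∪ {x}, y ≠ z → ¬ G.anc z y := fun y hy hne h => hne (hmax y hy h)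
  intro w hw
  obtain ⟨l₁, hp₁⟩ := exists_isColliderPath_of_mem_Mb hw
  have hp₁Mb : ∀ v ∈ w :: (l₁ ++ [x]), v ∈ G.Mb x ∪ {x} :=
    fun v => hp₁.mem_Mb_union (List.getLast?_concat (l := w :: l₁))
  rcases hz with hz | rfl
  swap
  · exact mem_paPlus_of_isColliderPath hA hp₁ rfl (List.getLast?_concat (l := w :: l₁))
      fun v hv => hndesc v (hp₁Mb v hv)
  obtain ⟨l₂, hp₂⟩ := exists_isColliderPath_of_mem_Mb hz
  have hr : G.IsColliderPath (x :: (l₂.reverse ++ [z])) := by simpa using hp₂.reverse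
  have hrMb : ∀ v ∈ x :: (l₂.reverse ++ [z]), v ∈ G.Mb x ∪ {x} := fun v hv =>
    hp₂.mem_Mb_union (List.getLast?_concat (l := z :: l₂)) (by simp at hv ⊢; tauto)
  have hl₂ : ∀ v ∈ l₂.reverse ++ [z], v ∈ G.district z := by
    have hz₂ : z ∉ l₂ := fun h => (List.nodup_cons.mp hp₂.1.2.1).1 (List.mem_append_left _ h)
    intro v hv
    rcases List.mem_append.mp hv with hv | hv
    · exact hr.mem_district_of_not_anc hA
        (fun u hu => hndesc u (hrMb u (by simp [hu])) fun h => hz₂ (h ▸ List.mem_reverse.mp hu)) hv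
    · exact List.mem_singleton.mp hv ▸ .refl
  by_cases hmeet : ∃ v ∈ w :: l₁, v ∈ G.district z
  · obtain ⟨v, hv, hvz⟩ := hmeet
    rcases List.mem_cons.mp hv with rfl | hv
    · exact district_subset_paPlus hvz
    · exact hp₁.mem_paPlus_of_mem_district hA hv hvz
  push Not at hmeet
  have hnd : ((w :: l₁) ++ x :: (l₂.reverse ++ [z])).Nodup := by
    refine List.nodup_append.mpr ⟨hp₁.1.2.1.of_append_left, hr.1.2.1, fun a ha b hb => ?_⟩
    rcases List.mem_cons.mp hb with rfl | hb
    · exact fun hab => List.disjoint_of_nodup_append hp₁.1.2.1 ha (hab ▸ List.mem_singleton_self _)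
    · exact fun hab => hmeet a ha (hab ▸ hl₂ b hb)
  refine mem_paPlus_of_append_cons hA hrem hp₁ hr hnd rfl (List.getLast?_concat (l := l₂.reverse))
    fun v hv => hndesc v ?_
  rcases List.mem_append.mp hv with hv | hv
  · exact hp₁Mb v (List.mem_append_left [x] hv)
  · exact hrMb v hv

end MixedGraph

open MixedGraph in
/-- if `X` is removable in a MAG `H`, then `|Mb(X)| ≤ δ⁺(H)`. -/
theorem stmt9 {V : Type*} [Fintype V] (H : MixedGraph V) (hH : H.IsMAG)
    (X : V) (hrem : H.Removable X) :
    (H.Mb X).ncard ≤ H.deltaPlus := by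
  obtain ⟨Z, hZ, hmax⟩ := exists_anc_maximal hH.1 (Set.toFinite (H.Mb X ∪ {X})) ⟨X, Or.inr rfl⟩
  calc (H.Mb X).ncard ≤ (H.paPlus Z).ncard :=
        Set.ncard_le_ncard (Mb_subset_paPlus hH.1 hrem hZ hmax) (Set.toFinite _)
    _ ≤ H.deltaPlus := Finset.le_sup (f := fun z => (H.paPlus z).ncard) (Finset.mem_univ Z)
end
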